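/- In U₂ = k⟨x₁,x₂⟩/(g₁, g₂ + z), where g₁ = x₁²x₂ − 2x₁x₂x₁ + x₂x₁² − x₂x₁x₂ + x₂²x₁, g₂ = x₁x₂² − 2x₂x₁x₂ + x₂²x₁ and z = x₁x₂ − x₂x₁, the assignment x₁ ↦ x₁ + x₂ + 1, x₂ ↦ x₂ + 1 extends to a well-defined algebra automorphism of U₂. -/

import Mathlib

/-- The defining relations of `U₂ = k⟨x₁,x₂⟩/(g₁, g₂ + z)` where
`g₁ = x₁²x₂ − 2x₁x₂x₁ + x₂x₁² − x₂x₁x₂ + x₂²x₁`,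
`g₂ = x₁x₂² − 2x₂x₁x₂ + x₂²x₁` and `z = x₁x₂ − x₂x₁`. -/
def u2Rel (k : Type*) [Field k] :
    FreeAlgebra k (Fin 2) → FreeAlgebra k (Fin 2) → Prop := fun u v =>
  (u = FreeAlgebra.ι k 0 * FreeAlgebra.ι k 0 * FreeAlgebra.ι k 1 -
        (2 : k) • (FreeAlgebra.ι k 0 * FreeAlgebra.ι k 1 * FreeAlgebra.ι k 0) +
        FreeAlgebra.ι k 1 * FreeAlgebra.ι k 0 * FreeAlgebra.ι k 0 -
        FreeAlgebra.ι k 1 * FreeAlgebra.ι k 0 * FreeAlgebra.ι k 1 +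
        FreeAlgebra.ι k 1 * FreeAlgebra.ι k 1 * FreeAlgebra.ι k 0 ∧ v = 0) ∨
  (u = FreeAlgebra.ι k 0 * FreeAlgebra.ι k 1 * FreeAlgebra.ι k 1 -
        (2 : k) • (FreeAlgebra.ι k 1 * FreeAlgebra.ι k 0 * FreeAlgebra.ι k 1) +
        FreeAlgebra.ι k 1 * FreeAlgebra.ι k 1 * FreeAlgebra.ι k 0 +
        (FreeAlgebra.ι k 0 * FreeAlgebra.ι k 1 - FreeAlgebra.ι k 1 * FreeAlgebra.ι k 0) ∧
    v = 0)

/-! The substitution `x₁ ↦ x₁ + x₂ + 1`, `x₂ ↦ x₂ + 1` transforms the relators by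
`g₁ ↦ g₁ − (g₂ + z)` and `g₂ + z ↦ g₂ + z`, so it preserves the ideal `(g₁, g₂ + z)` and descends
to an endomorphism of `U₂`. The substitution `x₁ ↦ x₁ − x₂`, `x₂ ↦ x₂ − 1` transforms them by
`g₁ ↦ g₁ + (g₂ + z)` and `g₂ + z ↦ g₂ + z`, so it descends as well, and the two endomorphisms are
mutually inverse because they are on the generators. -/

namespace U2

section Relators

variable {A : Type*} [Ring A]

def g₁ (a b : A) : A := a * a * b - 2 * (a * b * a) + b * a * a - b * a * b + b * b * a

/-- The deformed relator `g₂ + z`. -/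
def g₂z (a b : A) : A := a * b * b - 2 * (b * a * b) + b * b * a + (a * b - b * a)

theorem g₁_shift (a b : A) : g₁ (a + b + 1) (b + 1) = g₁ a b - g₂z a b := by
  unfold g₁ g₂z; noncomm_ring

theorem g₂z_shift (a b : A) : g₂z (a + b + 1) (b + 1) = g₂z a b := by
  unfold g₂z; noncomm_ring

theorem g₁_unshift (a b : A) : g₁ (a - b) (b - 1) = g₁ a b + g₂z a b := by
  unfold g₁ g₂z; noncomm_ring

theorem g₂z_unshift (a b : A) : g₂z (a - b) (b - 1) = g₂z a b := by
  unfold g₂z; noncomm_ring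

end Relators

variable {k : Type*} [Field k] {A B : Type*} [Ring A] [Algebra k A] [Ring B] [Algebra k B]

theorem map_g₁ (f : A →ₐ[k] B) (a b : A) :
    f (g₁ a b) = g₁ (f a) (f b) := by
  simp only [g₁, map_sub, map_add, map_mul, map_ofNat]

theorem map_g₂z (f : A →ₐ[k] B) (a b : A) :
    f (g₂z a b) = g₂z (f a) (f b) := by
  simp only [g₂z, map_sub, map_add, map_mul, map_ofNat]

theorem u2Rel_iff (u v : FreeAlgebra k (Fin 2)) :
    u2Rel k u v ↔ (u = g₁ (FreeAlgebra.ι k 0) (FreeAlgebra.ι k 1) ∧ v = 0) ∨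
      (u = g₂z (FreeAlgebra.ι k 0) (FreeAlgebra.ι k 1) ∧ v = 0) := by
  simp only [u2Rel, g₁, g₂z, Algebra.smul_def, map_ofNat]

variable (k) in
def gen (i : Fin 2) : RingQuot (u2Rel k) := RingQuot.mkAlgHom k (u2Rel k) (FreeAlgebra.ι k i)

theorem g₁_gen : g₁ (gen k 0) (gen k 1) = 0 := by
  rw [gen, gen, ← map_g₁, RingQuot.mkAlgHom_rel k ((u2Rel_iff _ _).2 (Or.inl ⟨rfl, rfl⟩)),
    map_zero]

theorem g₂z_gen : g₂z (gen k 0) (gen k 1) = 0 := by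
  rw [gen, gen, ← map_g₂z, RingQuot.mkAlgHom_rel k ((u2Rel_iff _ _).2 (Or.inr ⟨rfl, rfl⟩)),
    map_zero]

variable (k) in
def lift (a b : A) (h₁ : g₁ a b = 0) (h₂ : g₂z a b = 0) : RingQuot (u2Rel k) →ₐ[k] A :=
  RingQuot.liftAlgHom k ⟨FreeAlgebra.lift k ![a, b], fun u v huv => by
    rcases (u2Rel_iff u v).1 huv with ⟨rfl, rfl⟩ | ⟨rfl, rfl⟩
    · simpa [map_g₁] using h₁
    · simpa [map_g₂z] using h₂⟩

@[simp]
theorem lift_gen_zero (a b : A) (h₁ : g₁ a b = 0) (h₂ : g₂z a b = 0) :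
    lift k a b h₁ h₂ (gen k 0) = a := by
  simp [lift, gen, RingQuot.liftAlgHom_mkAlgHom_apply]

@[simp]
theorem lift_gen_one (a b : A) (h₁ : g₁ a b = 0) (h₂ : g₂z a b = 0) :
    lift k a b h₁ h₂ (gen k 1) = b := by
  simp [lift, gen, RingQuot.liftAlgHom_mkAlgHom_apply]

theorem hom_ext {f g : RingQuot (u2Rel k) →ₐ[k] A}
    (h₀ : f (gen k 0) = g (gen k 0)) (h₁ : f (gen k 1) = g (gen k 1)) : f = g := by
  refine RingQuot.ringQuot_ext' k f g (FreeAlgebra.hom_ext (funext fun i => ?_))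
  fin_cases i
  exacts [h₀, h₁]

end U2

open U2 in
theorem stmt12_general (k : Type*) [Field k] :
    ∃ φ : RingQuot (u2Rel k) ≃ₐ[k] RingQuot (u2Rel k),
      φ (RingQuot.mkAlgHom k _ (FreeAlgebra.ι k 0)) =
        RingQuot.mkAlgHom k _ (FreeAlgebra.ι k 0) +
        RingQuot.mkAlgHom k _ (FreeAlgebra.ι k 1) +
        algebraMap k (RingQuot (u2Rel k)) 1 ∧
      φ (RingQuot.mkAlgHom k _ (FreeAlgebra.ι k 1)) =
        RingQuot.mkAlgHom k _ (FreeAlgebra.ι k 1) + algebraMap k (RingQuot (u2Rel k)) 1 := by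
  let φ := lift k (gen k 0 + gen k 1 + 1) (gen k 1 + 1)
    (by rw [g₁_shift, g₁_gen, g₂z_gen, sub_zero]) (by rw [g₂z_shift, g₂z_gen])
  let ψ := lift k (gen k 0 - gen k 1) (gen k 1 - 1)
    (by rw [g₁_unshift, g₁_gen, g₂z_gen, add_zero]) (by rw [g₂z_unshift, g₂z_gen])
  refine ⟨AlgEquiv.ofAlgHom φ ψ ?_ ?_, ?_, ?_⟩
  · apply hom_ext <;> simp [φ, ψ]
  · apply hom_ext <;> simp [φ, ψ]
  · change φ (gen k 0) = gen k 0 + gen k 1 + algebraMap k _ 1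
    simp [φ]
  · change φ (gen k 1) = gen k 1 + algebraMap k _ 1
    simp [φ]

/-- in `U₂ = k⟨x₁,x₂⟩/(g₁, g₂ + z)`, the assignment
`x₁ ↦ x₁ + x₂ + 1`, `x₂ ↦ x₂ + 1` extends to an algebra automorphism. -/
theorem stmt12 (k : Type*) [Field k] [IsAlgClosed k] [CharZero k] :
    ∃ φ : RingQuot (u2Rel k) ≃ₐ[k] RingQuot (u2Rel k),
      φ (RingQuot.mkAlgHom k _ (FreeAlgebra.ι k 0)) =
        RingQuot.mkAlgHom k _ (FreeAlgebra.ι k 0) +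
        RingQuot.mkAlgHom k _ (FreeAlgebra.ι k 1) +
        algebraMap k (RingQuot (u2Rel k)) 1 ∧
      φ (RingQuot.mkAlgHom k _ (FreeAlgebra.ι k 1)) =
        RingQuot.mkAlgHom k _ (FreeAlgebra.ι k 1) + algebraMap k (RingQuot (u2Rel k)) 1 :=
  stmt12_general k
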